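/- arXiv:2407.12533 — 3 statements merged into one kernel-verified Lean document; each statement's English description precedes it below -/
import Mathlib

section
/- Let (S,·,*) be a regular *-semigroup and define a + b = aa*b. Then + is associative if and only if S is orthodox and locally inverse; in that case the semibrace axiom x(y+z) = xy + x(x*+z) also holds, so (S,+,·,*) is a left regular *-semibrace. -/
set_option linter.unusedVariables false


/-- Associativity of a binary operation. -/
def Assoc {S : Type*} (m : S → S → S) : Prop :=
  ∀ a b c : S, m (m a b) c = m a (m b c)

/-- `(S, m, st)` is a regular *-semigroup. -/
def RegStar {S : Type*} (m : S → S → S) (st : S → S) : Prop :=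
  Assoc m ∧ (∀ x : S, m (m x (st x)) x = x) ∧ (∀ x : S, st (st x) = x) ∧
    (∀ x y : S, st (m x y) = m (st y) (st x))

/-- Idempotent element. -/
def Idem {S : Type*} (m : S → S → S) (e : S) : Prop := m e e = e

/-- Projection: an idempotent fixed by the involution. -/
def Proj {S : Type*} (m : S → S → S) (st : S → S) (e : S) : Prop :=
  m e e = e ∧ st e = e

/-- Green's L relation. -/
def GreenL {S : Type*} (m : S → S → S) (a b : S) : Prop :=
  a = b ∨ ∃ u v : S, a = m u b ∧ b = m v a

/-- Green's R relation. -/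
def GreenR {S : Type*} (m : S → S → S) (a b : S) : Prop :=
  a = b ∨ ∃ u v : S, a = m b u ∧ b = m a v

/-- Green's H relation. -/
def GreenH {S : Type*} (m : S → S → S) (a b : S) : Prop :=
  GreenL m a b ∧ GreenR m a b

/-- Completely regular: every element is H-related to its square. -/
def CompletelyRegular {S : Type*} (m : S → S → S) : Prop :=
  ∀ x : S, GreenH m x (m x x)

/-- Inverse semigroup: every element has a unique inverse. -/
def InverseSgp {S : Type*} (m : S → S → S) : Prop :=
  ∀ a : S, ∃! b : S, m (m a b) a = a ∧ m (m b a) b = b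

/-- Locally inverse: each local submonoid `eSe` (for `e` idempotent) is inverse. -/
def LocallyInverse {S : Type*} (m : S → S → S) : Prop :=
  ∀ e : S, Idem m e → ∀ a : S, (∃ x : S, a = m (m e x) e) →
    ∃! b : S, (∃ x : S, b = m (m e x) e) ∧ m (m a b) a = a ∧ m (m b a) b = b

/-- Orthodox: the set of idempotents is closed under multiplication. -/
def Orthodox {S : Type*} (m : S → S → S) : Prop :=
  ∀ e f : S, Idem m e → Idem m f → Idem m (m e f)

/-- Clifford: every idempotent is central. -/
def Clifford {S : Type*} (m : S → S → S) : Prop :=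
  ∀ (x e : S), Idem m e → m e x = m x e

set_option linter.unusedSectionVars false
namespace A
variable {S : Type*} [Semigroup S] (st : S → S)

theorem idem_tail {a : S} (h : a * a = a) (x : S) : a * (a * x) = a * x := by
  rw [← mul_assoc, h]

/-- projection predicate -/
def Pr (e : S) : Prop := e * e = e ∧ st e = e

/-- the key condition C -/
def Cc : Prop := ∀ e f : S, Pr st e → Pr st f → ∀ x : S, e * (f * (e * x)) = e * (f * x)

section
variable (h1 : ∀ x : S, x * st x * x = x) (h2 : ∀ x : S, st (st x) = x)
  (h3 : ∀ x y : S, st (x * y) = st y * st x)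
include h1 h2 h3

theorem L2 (x : S) : st x * x * st x = st x := by
  have := h1 (st x); rwa [h2] at this

theorem projPr (x : S) : Pr st (x * st x) := by
  constructor
  · have : x * st x * (x * st x) = x * st x * x * st x := by simp only [mul_assoc]
    rw [this, h1]
  · rw [h3, h2]

theorem idemSt {u : S} (hu : u * u = u) : st u * st u = st u := by
  rw [← h3, hu]

theorem decomp {u : S} (hu : u * u = u) : u * st u * (st u * u) = u := by
  have h : u * st u * (st u * u) = u * (st u * st u) * u := by simp only [mul_assoc]
  rw [h, idemSt st h1 h2 h3 hu, h1]

theorem pqpP {u : S} (hu : u * u = u) :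
    u * st u * (st u * u) * (u * st u) = u * st u := by
  rw [decomp st h1 h2 h3 hu]
  calc u * (u * st u) = u * u * st u := by rw [mul_assoc]
    _ = u * st u := by rw [hu]

theorem qPr {u : S} (hu : u * u = u) : Pr st (st u * u) := by
  have := projPr st h1 h2 h3 (st u); rwa [h2] at this

theorem qpqP {u : S} (hu : u * u = u) :
    st u * u * (u * st u) * (st u * u) = st u * u := by
  have h := pqpP st h1 h2 h3 (u := st u) (idemSt st h1 h2 h3 hu)
  rwa [h2] at h

end
end A

namespace B
variable {S : Type*} [Semigroup S] (st : S → S)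
open A

theorem t3 {a b c : S} (h : a * b * c = a) : ∀ x : S, a * (b * (c * x)) = a * x := by
  intro x
  have h2 := congrArg (· * x) h
  simp only [mul_assoc] at h2
  exact h2

theorem quad_t {a b c d : S} (h : (a * b) * (c * d) = c * d) :
    ∀ x : S, a * (b * (c * (d * x))) = c * (d * x) := by
  intro x
  have h2 := congrArg (· * x) h
  simp only [mul_assoc] at h2
  exact h2

theorem quad_e {a b c d : S} (h : (a * b) * (c * d) = c * d) :
    a * (b * (c * d)) = c * d := by
  simp only [mul_assoc] at h; exact h

theorem quad_e2 {a b c d : S} (h : (a * b) * (c * d) = a * b) :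
    a * (b * (c * d)) = a * b := by
  simp only [mul_assoc] at h; exact h

section
variable (h1 : ∀ x : S, x * st x * x = x) (h2 : ∀ x : S, st (st x) = x)
  (h3 : ∀ x y : S, st (x * y) = st y * st x)
include h1 h2 h3

theorem cR_t (hC : Cc st) {e f : S} (he : Pr st e) (hf : Pr st f) :
    ∀ y x : S, y * (f * (e * (f * x))) = y * (e * (f * x)) := by
  have hend : ∀ y : S, y * (f * (e * f)) = y * (e * f) := by
    intro y
    have h := congrArg st (hC f e hf he (st y))
    simp only [h3, h2, he.2, hf.2] at h
    simp only [mul_assoc] at h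
    exact h
  intro y x
  have h := congrArg (· * x) (hend y)
  simp only [mul_assoc] at h
  exact h

end

/-- orthodoxy core word computation -/
theorem ortho_core {p q r s : S}
    (cLps : ∀ x : S, p * (s * (p * x)) = p * (s * x))
    (cRsp : ∀ y x : S, y * (p * (s * (p * x))) = y * (s * (p * x)))
    (cRpr : ∀ y x : S, y * (p * (r * (p * x))) = y * (r * (p * x)))
    (cLpr : ∀ x : S, p * (r * (p * x)) = p * (r * x))
    (cRqr : ∀ y x : S, y * (r * (q * (r * x))) = y * (q * (r * x)))
    (pqp_t : ∀ x : S, p * (q * (p * x)) = p * x)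
    (rsr_t : ∀ x : S, r * (s * (r * x)) = r * x) :
    p * (q * (r * (s * (p * (q * (r * s)))))) = p * (q * (r * s)) := by
  conv_lhs => rw [← cRsp, cLps, ← cRpr, pqp_t, cLpr, ← cRqr, rsr_t, cRqr]

section
variable (h1 : ∀ x : S, x * st x * x = x) (h2 : ∀ x : S, st (st x) = x)
  (h3 : ∀ x y : S, st (x * y) = st y * st x) (hC : Cc st)
include h1 h2 h3 hC

theorem ortho_of_C : ∀ u v : S, u * u = u → v * v = v → (u * v) * (u * v) = u * v := by
  intro u v hu hv
  have hp : Pr st (u * st u) := projPr st h1 h2 h3 u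
  have hq : Pr st (st u * u) := qPr st h1 h2 h3 hu
  have hr : Pr st (v * st v) := projPr st h1 h2 h3 v
  have hs : Pr st (st v * v) := qPr st h1 h2 h3 hv
  have key := ortho_core (p := u * st u) (q := st u * u) (r := v * st v) (s := st v * v)
    (hC _ _ hp hs) (cR_t st h1 h2 h3 hC hs hp) (cR_t st h1 h2 h3 hC hr hp)
    (hC _ _ hp hr) (cR_t st h1 h2 h3 hC hq hr)
    (t3 (pqpP st h1 h2 h3 hu)) (t3 (pqpP st h1 h2 h3 hv))
  have hdu := decomp st h1 h2 h3 hu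
  have hdv := decomp st h1 h2 h3 hv
  calc (u * v) * (u * v)
      = u * st u * (st u * u) * (v * st v * (st v * v)) *
        (u * st u * (st u * u) * (v * st v * (st v * v))) := by rw [hdu, hdv]
    _ = u * st u * (st u * u * (v * st v * (st v * v * (u * st u *
          (st u * u * (v * st v * (st v * v))))))) := by simp only [mul_assoc]
    _ = u * st u * (st u * u * (v * st v * (st v * v))) := by
          simp only [mul_assoc] at key ⊢
          exact key
    _ = u * v := by rw [← mul_assoc, hdu, hdv]
end

/-- local commutativity core word computation -/
theorem ccomm_core {a b p q r s : S}
    (cRrs : ∀ y x : S, y * (s * (r * (s * x))) = y * (r * (s * x)))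
    (srs_t : ∀ x : S, s * (r * (s * x)) = s * x)
    (cLqs : ∀ x : S, q * (s * (q * x)) = q * (s * x))
    (eu_t : ∀ x : S, a * (b * (p * (q * x))) = p * (q * x))
    (cRsq : ∀ y x : S, y * (q * (s * (q * x))) = y * (s * (q * x)))
    (cRps : ∀ y x : S, y * (s * (p * (s * x))) = y * (p * (s * x)))
    (cLsp : ∀ x : S, s * (p * (s * x)) = s * (p * x))
    (ue_e : p * (q * (a * b)) = p * q)
    (ev_t : ∀ x : S, a * (b * (r * (s * x))) = r * (s * x))
    (ve_e : r * (s * (a * b)) = r * s) :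
    p * (q * (r * s)) = r * (s * (p * q)) := by
  conv_lhs => rw [← ve_e, ← cRrs, srs_t, ← cLqs, ← eu_t, cRsq, ← cRps, cLsp,
    ue_e, ← srs_t, cRrs, ev_t]

section
variable (h1 : ∀ x : S, x * st x * x = x) (h2 : ∀ x : S, st (st x) = x)
  (h3 : ∀ x y : S, st (x * y) = st y * st x) (hC : Cc st)
include h1 h2 h3 hC

theorem ccomm_of_C : ∀ e u v : S, e * e = e → u * u = u → v * v = v →
    e * u = u → u * e = u → e * v = v → v * e = v → u * v = v * u := by
  intro e u v he hu hv heu hue hev hve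
  have hp : Pr st (u * st u) := projPr st h1 h2 h3 u
  have hq : Pr st (st u * u) := qPr st h1 h2 h3 hu
  have hr : Pr st (v * st v) := projPr st h1 h2 h3 v
  have hs : Pr st (st v * v) := qPr st h1 h2 h3 hv
  have de := decomp st h1 h2 h3 he
  have du := decomp st h1 h2 h3 hu
  have dv := decomp st h1 h2 h3 hv
  have key := ccomm_core (a := e * st e) (b := st e * e)
    (p := u * st u) (q := st u * u) (r := v * st v) (s := st v * v)
    (cR_t st h1 h2 h3 hC hr hs)
    (t3 (qpqP st h1 h2 h3 hv))
    (hC _ _ hq hs)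
    (quad_t (by rw [de, du, heu]))
    (cR_t st h1 h2 h3 hC hs hq)
    (cR_t st h1 h2 h3 hC hp hs)
    (hC _ _ hs hp)
    (quad_e2 (by rw [du, de]; exact hue))
    (quad_t (by rw [de, dv, hev]))
    (quad_e2 (by rw [dv, de]; exact hve))
  calc u * v = (u * st u * (st u * u)) * (v * st v * (st v * v)) := by rw [du, dv]
    _ = u * st u * (st u * u * (v * st v * (st v * v))) := by simp only [mul_assoc]
    _ = v * st v * (st v * v * (u * st u * (st u * u))) := by
          simp only [mul_assoc] at key ⊢; exact key
    _ = (v * st v * (st v * v)) * (u * st u * (st u * u)) := by simp only [mul_assoc]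
    _ = v * u := by rw [du, dv]
end

theorem sandw_l {e b : S} (he : e * e = e) (hm : ∃ x, b = e * x * e) : e * b = b := by
  obtain ⟨x, rfl⟩ := hm
  rw [← mul_assoc, ← mul_assoc, he]

theorem sandw_r {e b : S} (he : e * e = e) (hm : ∃ x, b = e * x * e) : b * e = b := by
  obtain ⟨x, rfl⟩ := hm
  rw [mul_assoc, he]

section
variable (h1 : ∀ x : S, x * st x * x = x) (h2 : ∀ x : S, st (st x) = x)
  (h3 : ∀ x y : S, st (x * y) = st y * st x) (hC : Cc st)
include h1 h2 h3 hC

theorem li_of_C : ∀ e : S, e * e = e → ∀ a : S, (∃ x, a = e * x * e) →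
    ∃! b : S, (∃ x, b = e * x * e) ∧ a * b * a = a ∧ b * a * b = b := by
  intro e he a ha
  have hea : e * a = a := sandw_l he ha
  have hae : a * e = a := sandw_r he ha
  have hea_t : ∀ x : S, e * (a * x) = a * x := fun x => by rw [← mul_assoc, hea]
  have hae_t : ∀ x : S, a * (e * x) = a * x := fun x => by rw [← mul_assoc, hae]
  have hmem : ∃ x, e * st a * e = e * x * e := ⟨st a, rfl⟩
  have hinv1 : a * (e * st a * e) * a = a := by
    have : a * (e * st a * e) * a = a * st a * a := by
      simp only [mul_assoc]
      rw [hea, hae_t]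
    rw [this, h1]
  have hinv2 : (e * st a * e) * a * (e * st a * e) = e * st a * e := by
    have l2t : ∀ x : S, st a * (a * (st a * x)) = st a * x := t3 (L2 st h1 h2 h3 a)
    simp only [mul_assoc]
    rw [hea_t, hae_t, l2t]
  -- any two inverses of a in eSe coincide
  have two : ∀ b₁ b₂ : S, (∃ x, b₁ = e * x * e) → (∃ x, b₂ = e * x * e) →
      a * b₁ * a = a → b₁ * a * b₁ = b₁ → a * b₂ * a = a → b₂ * a * b₂ = b₂ →
      b₁ = b₂ := by
    intro b₁ b₂ m₁ m₂ inv₁a inv₁b inv₂a inv₂b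
    have b₁e : b₁ * e = b₁ := sandw_r he m₁
    have b₂e : b₂ * e = b₂ := sandw_r he m₂
    have eb₁ : e * b₁ = b₁ := sandw_l he m₁
    have eb₂ : e * b₂ = b₂ := sandw_l he m₂
    have idem1 : (a * b₁) * (a * b₁) = a * b₁ := by
      have h := congrArg (· * b₁) inv₁a
      simp only [mul_assoc] at h ⊢; exact h
    have idem2 : (a * b₂) * (a * b₂) = a * b₂ := by
      have h := congrArg (· * b₂) inv₂a
      simp only [mul_assoc] at h ⊢; exact h
    have idem3 : (b₁ * a) * (b₁ * a) = b₁ * a := by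
      have h := congrArg (· * a) inv₁b
      simp only [mul_assoc] at h ⊢; exact h
    have idem4 : (b₂ * a) * (b₂ * a) = b₂ * a := by
      have h := congrArg (· * a) inv₂b
      simp only [mul_assoc] at h ⊢; exact h
    have comm1 : (a * b₁) * (a * b₂) = (a * b₂) * (a * b₁) :=
      ccomm_of_C st h1 h2 h3 hC e (a * b₁) (a * b₂) he idem1 idem2
        (by rw [← mul_assoc, hea]) (by rw [mul_assoc, b₁e])
        (by rw [← mul_assoc, hea]) (by rw [mul_assoc, b₂e])
    have comm2 : (b₁ * a) * (b₂ * a) = (b₂ * a) * (b₁ * a) :=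
      ccomm_of_C st h1 h2 h3 hC e (b₁ * a) (b₂ * a) he idem3 idem4
        (by rw [← mul_assoc, eb₁]) (by rw [mul_assoc, hae])
        (by rw [← mul_assoc, eb₂]) (by rw [mul_assoc, hae])
    have k1 : a * b₁ = (a * b₂) * (a * b₁) := by
      conv_lhs => rw [← inv₂a]
      simp only [mul_assoc]
    have k2 : b₂ * a = (b₂ * a) * (b₁ * a) := by
      conv_lhs => rw [← inv₁a]
      simp only [mul_assoc]
    have c1 : b₁ = b₁ * (a * b₂) := by
      calc b₁ = b₁ * a * b₁ := inv₁b.symm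
        _ = b₁ * (a * b₁) := by rw [mul_assoc]
        _ = b₁ * ((a * b₂) * (a * b₁)) := by conv_lhs => rw [k1]
        _ = b₁ * ((a * b₁) * (a * b₂)) := by rw [comm1]
        _ = (b₁ * (a * b₁)) * (a * b₂) := by simp only [mul_assoc]
        _ = b₁ * (a * b₂) := by rw [show b₁ * (a * b₁) = b₁ from by
              rw [← mul_assoc]; exact inv₁b]
    have c2 : b₂ = b₁ * (a * b₂) := by
      calc b₂ = b₂ * a * b₂ := inv₂b.symm
        _ = ((b₂ * a) * (b₁ * a)) * b₂ := by conv_lhs => rw [k2]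
        _ = ((b₁ * a) * (b₂ * a)) * b₂ := by rw [comm2]
        _ = (b₁ * a) * (b₂ * a * b₂) := by simp only [mul_assoc]
        _ = (b₁ * a) * b₂ := by rw [inv₂b]
        _ = b₁ * (a * b₂) := by rw [mul_assoc]
    exact c1.trans c2.symm
  exact ⟨e * st a * e, ⟨hmem, hinv1, hinv2⟩,
    fun y hy => two y (e * st a * e) hy.1 hmem hy.2.1 hy.2.2 hinv1 hinv2⟩
end

section
variable (h1 : ∀ x : S, x * st x * x = x) (h2 : ∀ x : S, st (st x) = x)
  (h3 : ∀ x y : S, st (x * y) = st y * st x)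
include h1 h2 h3

theorem inv_cand₁ {e a : S} (he : e * e = e) (ha : ∃ x, a = e * x * e) :
    a * (e * st a * e) * a = a := by
  have hea_t : ∀ x : S, e * (a * x) = a * x := fun x => by rw [← mul_assoc, sandw_l he ha]
  have hae_t : ∀ x : S, a * (e * x) = a * x := fun x => by rw [← mul_assoc, sandw_r he ha]
  have : a * (e * st a * e) * a = a * st a * a := by
    simp only [mul_assoc]
    rw [sandw_l he ha, hae_t]
  rw [this, h1]

theorem inv_cand₂ {e a : S} (he : e * e = e) (ha : ∃ x, a = e * x * e) :
    (e * st a * e) * a * (e * st a * e) = e * st a * e := by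
  have hea_t : ∀ x : S, e * (a * x) = a * x := fun x => by rw [← mul_assoc, sandw_l he ha]
  have hae_t : ∀ x : S, a * (e * x) = a * x := fun x => by rw [← mul_assoc, sandw_r he ha]
  have l2t : ∀ x : S, st a * (a * (st a * x)) = st a * x := t3 (L2 st h1 h2 h3 a)
  simp only [mul_assoc]
  rw [hea_t, hae_t, l2t]

variable (hLI : ∀ e : S, e * e = e → ∀ a : S, (∃ x, a = e * x * e) →
    ∃! b : S, (∃ x, b = e * x * e) ∧ a * b * a = a ∧ b * a * b = b)
include hLI

theorem idem_mul_of_LI : ∀ g u v : S, g * g = g → u * u = u → v * v = v →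
    g * u = u → u * g = u → g * v = v → v * g = v → (u * v) * (u * v) = u * v := by
  intro g u v hg hu hv hgu hug hgv hvg
  have mem : ∃ x, u * v = g * x * g :=
    ⟨u * v, (show g * (u * v) * g = u * v by
      simp only [← mul_assoc]; rw [hgu, mul_assoc, hvg]).symm⟩
  have t1 := inv_cand₁ st h1 h2 h3 hg mem
  have t2 := inv_cand₂ st h1 h2 h3 hg mem
  obtain ⟨b, hb, huniq⟩ := hLI g hg (u * v) mem
  have wmem : ∃ x, v * (g * st (u * v) * g) * u = g * x * g :=
    ⟨v * (g * st (u * v) * g) * u, (show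
      g * (v * (g * st (u * v) * g) * u) * g = v * (g * st (u * v) * g) * u by
      simp only [← mul_assoc]; rw [hgv, mul_assoc, hug]).symm⟩
  have haw : (u * v) * (v * (g * st (u * v) * g) * u) * (u * v) = u * v := by
    have h := t1
    simp only [mul_assoc] at h ⊢
    rw [idem_tail hv, idem_tail hu]
    exact h
  have hwa : (v * (g * st (u * v) * g) * u) * ((u * v) * (v * (g * st (u * v) * g) * u))
      = v * (g * st (u * v) * g) * u := by
    have h := congrArg (fun z => v * (z * u)) t2
    simp only [mul_assoc] at h ⊢
    rw [idem_tail hu, idem_tail hv]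
    exact h
  have hw : v * (g * st (u * v) * g) * u = b := huniq _ ⟨wmem, by
      simp only [mul_assoc] at haw ⊢; exact haw, by
      simp only [mul_assoc] at hwa ⊢; exact hwa⟩
  have ht' : g * st (u * v) * g = b := huniq _ ⟨⟨st (u * v), rfl⟩, t1, t2⟩
  have tw : g * st (u * v) * g = v * (g * st (u * v) * g) * u := ht'.trans hw.symm
  have hww : (v * (g * st (u * v) * g) * u) * (v * (g * st (u * v) * g) * u)
      = v * (g * st (u * v) * g) * u := by
    have h := congrArg (fun z => v * (z * u)) t2
    simp only [mul_assoc] at h ⊢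
    exact h
  have htt : (g * st (u * v) * g) * (g * st (u * v) * g) = g * st (u * v) * g := by
    rw [tw]; exact hww
  obtain ⟨c, hc, huniq2⟩ := hLI g hg (g * st (u * v) * g) ⟨st (u * v), rfl⟩
  have ha_inv : u * v = c := huniq2 _ ⟨mem, t2, t1⟩
  have ht_inv : g * st (u * v) * g = c := huniq2 _ ⟨⟨st (u * v), rfl⟩, by
      rw [htt, htt], by rw [htt, htt]⟩
  have hat : u * v = g * st (u * v) * g := ha_inv.trans ht_inv.symm
  rw [hat]; exact htt

theorem lc_of_LI : ∀ g u v : S, g * g = g → u * u = u → v * v = v →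
    g * u = u → u * g = u → g * v = v → v * g = v → u * v = v * u := by
  intro g u v hg hu hv hgu hug hgv hvg
  have iuv := idem_mul_of_LI st h1 h2 h3 hLI g u v hg hu hv hgu hug hgv hvg
  have ivu := idem_mul_of_LI st h1 h2 h3 hLI g v u hg hv hu hgv hvg hgu hug
  have mem : ∃ x, u * v = g * x * g :=
    ⟨u * v, (show g * (u * v) * g = u * v by
      simp only [← mul_assoc]; rw [hgu, mul_assoc, hvg]).symm⟩
  have mem' : ∃ x, v * u = g * x * g :=
    ⟨v * u, (show g * (v * u) * g = v * u by
      simp only [← mul_assoc]; rw [hgv, mul_assoc, hug]).symm⟩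
  obtain ⟨d, hd, huniqd⟩ := hLI g hg (u * v) mem
  have p1 : u * v = d := huniqd _ ⟨mem, by rw [iuv, iuv], by rw [iuv, iuv]⟩
  have p2 : v * u = d := by
    refine huniqd _ ⟨mem', ?_, ?_⟩
    · have h := iuv
      simp only [mul_assoc] at h ⊢
      rw [idem_tail hv, idem_tail hu]
      exact h
    · have h := ivu
      simp only [mul_assoc] at h ⊢
      rw [idem_tail hu, idem_tail hv]
      exact h
  exact p1.trans p2.symm
end

/-- core word computation for C from orthodox + local commutativity -/
theorem oli_core {e f p : S}
    (i_ep_e : e * (p * (e * p)) = e * p)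
    (i_pe_t : ∀ x : S, p * (e * (p * (e * x))) = p * (e * x))
    (i_pef_t : ∀ x : S, p * (e * (f * (p * (e * (f * x))))) = p * (e * (f * x)))
    (i_epef_t : ∀ x : S, e * (p * (e * (f * (e * (p * (e * (f * x))))))) = e * (p * (e * (f * x))))
    (i_efp_e : e * (f * (p * (e * (f * p)))) = e * (f * p))
    (c2' : e * (f * (e * (p * (e * p)))) = e * (p * (e * (f * (e * p)))))
    (c4' : e * (p * (e * (f * (p * (e * (f * (e * p))))))) =
           e * (p * (e * (f * (e * (p * (e * (f * p))))))))
    (c7' : e * (p * (e * (f * (p * (e * (f * p)))))) =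
           e * (f * (p * (e * (p * (e * (f * p))))))) :
    e * (f * (e * p)) = e * (f * p) := by
  conv_lhs => rw [← i_ep_e, c2', ← i_pef_t, c4', i_epef_t, ← i_efp_e, c7', i_pe_t, i_efp_e]

section
variable (h1 : ∀ x : S, x * st x * x = x) (h2 : ∀ x : S, st (st x) = x)
  (h3 : ∀ x y : S, st (x * y) = st y * st x)
include h1 h2 h3

theorem C_of_OLI
    (hO : ∀ u v : S, u * u = u → v * v = v → (u * v) * (u * v) = u * v)
    (hLC : ∀ g u v : S, g * g = g → u * u = u → v * v = v →
      g * u = u → u * g = u → g * v = v → v * g = v → u * v = v * u) :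
    Cc st := by
  intro e f he hf x
  set p := x * st x with hpdef
  have hp : Pr st p := projPr st h1 h2 h3 x
  have i_ef := hO e f he.1 hf.1
  have i_ep := hO e p he.1 hp.1
  have i_pe := hO p e hp.1 he.1
  have i_pef := hO p (e * f) hp.1 i_ef
  have i_epef := hO (e * p) (e * f) i_ep i_ef
  have i_efp := hO (e * f) p i_ef hp.1
  have i_efe := hO (e * f) e i_ef he.1
  have i_epe := hO (e * p) e i_ep he.1
  have i_efpe := hO (e * (f * p)) e (hO e (f * p) he.1 (hO f p hf.1 hp.1)) he.1
  have i_pefp := hO (p * (e * f)) p i_pef hp.1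
  have i_efe' := hO e (f * e) he.1 (hO f e hf.1 he.1)
  have i_pefep := hO (p * (e * f * e)) p (hO p (e * f * e) hp.1 i_efe) hp.1
  have i_ep_e : e * (p * (e * p)) = e * p := by
    have h := i_ep; simp only [mul_assoc] at h; exact h
  have i_pe_t : ∀ x : S, p * (e * (p * (e * x))) = p * (e * x) := fun y => by
    have h := congrArg (· * y) i_pe; simp only [mul_assoc] at h; exact h
  have i_pef_t : ∀ x : S, p * (e * (f * (p * (e * (f * x))))) = p * (e * (f * x)) := fun y => by
    have h := congrArg (· * y) i_pef; simp only [mul_assoc] at h; exact h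
  have i_epef_t : ∀ x : S, e * (p * (e * (f * (e * (p * (e * (f * x)))))))
      = e * (p * (e * (f * x))) := fun y => by
    have h := congrArg (· * y) i_epef; simp only [mul_assoc] at h; exact h
  have i_efp_e : e * (f * (p * (e * (f * p)))) = e * (f * p) := by
    have h := i_efp; simp only [mul_assoc] at h; exact h
  have c2 : (e * f * e) * (e * p * e) = (e * p * e) * (e * f * e) := by
    refine hLC e (e * f * e) (e * p * e) he.1 i_efe i_epe ?_ ?_ ?_ ?_
    · simp only [← mul_assoc]; rw [he.1]
    · rw [mul_assoc, he.1]
    · simp only [← mul_assoc]; rw [he.1]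
    · rw [mul_assoc, he.1]
  have c4 : (p * (e * f) * p) * (p * (e * f * e) * p)
      = (p * (e * f * e) * p) * (p * (e * f) * p) := by
    refine hLC p (p * (e * f) * p) (p * (e * f * e) * p) hp.1 i_pefp i_pefep ?_ ?_ ?_ ?_
    · simp only [← mul_assoc]; rw [hp.1]
    · rw [mul_assoc, hp.1]
    · simp only [← mul_assoc]; rw [hp.1]
    · rw [mul_assoc, hp.1]
  have c7 : (e * p * e) * (e * (f * p) * e) = (e * (f * p) * e) * (e * p * e) := by
    refine hLC e (e * p * e) (e * (f * p) * e) he.1 i_epe i_efpe ?_ ?_ ?_ ?_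
    · simp only [← mul_assoc]; rw [he.1]
    · rw [mul_assoc, he.1]
    · simp only [← mul_assoc]; rw [he.1]
    · rw [mul_assoc, he.1]
  have c2' : e * (f * (e * (p * (e * p)))) = e * (p * (e * (f * (e * p)))) := by
    have h := congrArg (· * p) c2
    simp only [mul_assoc, idem_tail he.1] at h; exact h
  have c4' : e * (p * (e * (f * (p * (e * (f * (e * p))))))) =
      e * (p * (e * (f * (e * (p * (e * (f * p))))))) := by
    have h := congrArg (e * ·) c4
    simp only [mul_assoc, idem_tail hp.1] at h; exact h
  have c7' : e * (p * (e * (f * (p * (e * (f * p)))))) =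
      e * (f * (p * (e * (p * (e * (f * p)))))) := by
    have h := congrArg (· * (f * p)) c7
    simp only [mul_assoc, idem_tail he.1] at h; exact h
  have key := oli_core i_ep_e i_pe_t i_pef_t i_epef_t i_efp_e c2' c4' c7'
  have hx : p * x = x := h1 x
  calc e * (f * (e * x)) = e * (f * (e * (p * x))) := by rw [hx]
    _ = (e * (f * (e * p))) * x := by simp only [mul_assoc]
    _ = (e * (f * p)) * x := by rw [key]
    _ = e * (f * (p * x)) := by simp only [mul_assoc]
    _ = e * (f * x) := by rw [hx]
end

section
variable (h1 : ∀ x : S, x * st x * x = x) (h2 : ∀ x : S, st (st x) = x)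
  (h3 : ∀ x y : S, st (x * y) = st y * st x)
include h1 h2 h3

theorem qPr' (x : S) : Pr st (st x * x) := by
  have := projPr st h1 h2 h3 (st x); rwa [h2] at this

theorem assoc_of_C (hC : Cc st) (add : S → S → S)
    (hadd : ∀ a b : S, add a b = a * st a * b) :
    ∀ a b c : S, add (add a b) c = add a (add b c) := by
  intro a b c
  have key := hC (a * st a) (b * st b) (projPr st h1 h2 h3 a) (projPr st h1 h2 h3 b) c
  simp only [hadd, h3, h2]
  simp only [mul_assoc] at key ⊢
  exact key

theorem C_of_assoc (add : S → S → S) (hadd : ∀ a b : S, add a b = a * st a * b)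
    (hAs : ∀ a b c : S, add (add a b) c = add a (add b c)) : Cc st := by
  intro e f he hf x
  have h := hAs e f x
  simp only [hadd, h3, h2, he.2, hf.2] at h
  simp only [mul_assoc, idem_tail he.1, idem_tail hf.1] at h
  exact h

theorem sb (hC : Cc st) (add : S → S → S)
    (hadd : ∀ a b : S, add a b = a * st a * b) :
    ∀ x y z : S, x * add y z = add (x * y) (x * add (st x) z) := by
  intro x y z
  have key := hC (st x * x) (y * st y) (qPr' st h1 h2 h3 x) (projPr st h1 h2 h3 y) z
  have h1t : ∀ w : S, x * (st x * (x * w)) = x * w := t3 (h1 x)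
  simp only [hadd, h3, h2]
  simp only [mul_assoc] at key ⊢
  calc x * (y * (st y * z))
      = x * (st x * (x * (y * (st y * z)))) := (h1t _).symm
    _ = x * (st x * (x * (y * (st y * (st x * (x * z)))))) := by rw [← key]
    _ = x * (y * (st y * (st x * (x * z)))) := h1t _
    _ = x * (y * (st y * (st x * (x * (st x * (x * z)))))) := by rw [h1t]
end
end B

theorem stmt15 {S : Type*} (m : S → S → S) (st : S → S)
    (hS : RegStar m st) (add : S → S → S)
    (hadd : ∀ a b : S, add a b = m (m a (st a)) b) :
    (Assoc add ↔ (Orthodox m ∧ LocallyInverse m)) ∧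
    ((Orthodox m ∧ LocallyInverse m) →
      ∀ x y z : S, m x (add y z) = add (m x y) (m x (add (st x) z))) := by
  obtain ⟨hA, h1, h2, h3⟩ := hS
  letI : Semigroup S := { mul := m, mul_assoc := hA }
  have hOLI_of_C : A.Cc st → Orthodox m ∧ LocallyInverse m := fun hC =>
    ⟨fun u v hu hv => B.ortho_of_C st h1 h2 h3 hC u v hu hv,
     fun e he a ha => B.li_of_C st h1 h2 h3 hC e he a ha⟩
  have hC_of_OLI : Orthodox m ∧ LocallyInverse m → A.Cc st := fun h =>
    B.C_of_OLI st h1 h2 h3 (fun u v hu hv => h.1 u v hu hv)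
      (B.lc_of_LI st h1 h2 h3 (fun e he a ha => h.2 e he a ha))
  exact ⟨⟨fun hAs => hOLI_of_C (B.C_of_assoc st h1 h2 h3 add hadd hAs),
      fun h => B.assoc_of_C st h1 h2 h3 (hC_of_OLI h) add hadd⟩,
    fun h x y z => B.sb st h1 h2 h3 (hC_of_OLI h) add hadd x y z⟩
end

section
/- Let (S,·,*) be a regular *-semigroup and define a + b = aa*b, giving λ_x(y) = x(x*+y) = xy and ρ_y(x) = (x*+y)*y = (xy)*xy. Then the map r(x,y) = (λ_x(y), ρ_y(x)) is always a set-theoretic solution of the Yang–Baxter equation. -/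
theorem stmt16 {S : Type*} (m : S → S → S) (st : S → S)
    (hS : RegStar m st) (add : S → S → S)
    (hadd : ∀ a b : S, add a b = m (m a (st a)) b)
    (lam rho : S → S → S)
    (hlam : ∀ x y : S, lam x y = m x (add (st x) y))
    (hrho : ∀ y x : S, rho y x = m (st (add (st x) y)) y) :
    (∀ x y z : S, lam x (lam y z) = lam (lam x y) (lam (rho y x) z)) ∧
    (∀ x y z : S, rho z (rho y x) = rho (rho z y) (rho (lam y z) x)) ∧
    (∀ x y z : S,
      lam (rho (lam y z) x) (rho z y) = rho (lam (rho y x) z) (lam x y)) := by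
  obtain ⟨hA0, h1, h2, h3⟩ := hS
  have hA : ∀ a b c : S, m (m a b) c = m a (m b c) := hA0
  have h1' : ∀ x, m x (m (st x) x) = x := fun x => by rw [← hA]; exact h1 x
  have h1'' : ∀ x t, m x (m (st x) (m x t)) = m x t := fun x t => by
    rw [← hA, ← hA, h1]
  have h1s : ∀ x, m (st x) (m x (st x)) = st x := fun x => by
    have := h1' (st x); rwa [h2] at this
  have h1s' : ∀ x t, m (st x) (m x (m (st x) t)) = m (st x) t := fun x t => by
    have := h1'' (st x) t; rwa [h2] at this
  have lam' : ∀ x y, lam x y = m x y := fun x y => by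
    rw [hlam, hadd, h2, ← hA, h1']
  have rho' : ∀ y x, rho y x = m (m (st y) (st x)) (m x y) := fun y x => by
    rw [hrho, hadd, h2, h3, h3, h2, hA, hA, hA]
  have c2 : ∀ x y t, m x (m y (m (st y) (m (st x) (m x (m y t))))) = m x (m y t) :=
    fun x y t => by have := h1'' (m x y) t; simpa [hA, h3] using this
  have c2e : ∀ x y, m x (m y (m (st y) (m (st x) (m x y)))) = m x y :=
    fun x y => by have := h1' (m x y); simpa [hA, h3] using this
  have s2 : ∀ x y t, m (st y) (m (st x) (m x (m y (m (st y) (m (st x) t))))) =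
      m (st y) (m (st x) t) :=
    fun x y t => by have := h1s' (m x y) t; simpa [hA, h3] using this
  have s2e : ∀ x y, m (st y) (m (st x) (m x (m y (m (st y) (st x))))) = m (st y) (st x) :=
    fun x y => by have := h1s (m x y); simpa [hA, h3] using this
  have c3 : ∀ x y z t, m x (m y (m z (m (st z) (m (st y) (m (st x) (m x (m y (m z t)))))))) =
      m x (m y (m z t)) :=
    fun x y z t => by have := h1'' (m x (m y z)) t; simpa [hA, h3] using this
  have c3e : ∀ x y z, m x (m y (m z (m (st z) (m (st y) (m (st x) (m x (m y z))))))) =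
      m x (m y z) :=
    fun x y z => by have := h1' (m x (m y z)); simpa [hA, h3] using this
  have s3 : ∀ x y z t, m (st z) (m (st y) (m (st x) (m x (m y (m z
      (m (st z) (m (st y) (m (st x) t)))))))) = m (st z) (m (st y) (m (st x) t)) :=
    fun x y z t => by have := h1s' (m x (m y z)) t; simpa [hA, h3] using this
  have s3e : ∀ x y z, m (st z) (m (st y) (m (st x) (m x (m y (m z
      (m (st z) (m (st y) (st x)))))))) = m (st z) (m (st y) (st x)) :=
    fun x y z => by have := h1s (m x (m y z)); simpa [hA, h3] using this
  refine ⟨?_, ?_, ?_⟩ <;> intro x y z <;>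
    simp only [lam', rho', hA, h3, h2, h1', h1'', h1s, h1s', c2, c2e, s2, s2e, c3, c3e, s3, s3e]
end

section
/- In a weak left *-brace, the sets of projections of the two regular *-semigroup structures coincide: {e : e+e = e, -e = e} = {f : f·f = f, f* = f}, and both equal {x - x : x ∈ S} = {xx* : x ∈ S}. -/
/-- `(S,+,·,-,*)` is a weak left *-brace. -/
def WeakStarBrace {S : Type*} (add : S → S → S) (neg : S → S)
    (m : S → S → S) (st : S → S) : Prop :=
  RegStar add neg ∧ RegStar m st ∧
    (∀ x y z : S, m x (add y z) = add (add (m x y) (neg x)) (m x z)) ∧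
    (∀ x : S, add (neg x) x = m x (st x))

lemma regstar_proj {S : Type*} (m : S → S → S) (st : S → S) (h : RegStar m st) :
    {f : S | m f f = f ∧ st f = f} = {x : S | ∃ a : S, x = m a (st a)} := by
  obtain ⟨hassoc, hreg, hinv, hanti⟩ := h
  ext x
  constructor
  · rintro ⟨h1, h2⟩
    exact ⟨x, by rw [h2, h1]⟩
  · rintro ⟨a, rfl⟩
    have key : m (st a) (m a (st a)) = st a := by
      have := congrArg st (hreg a)
      rwa [hanti, hanti, hinv] at this
    constructor
    · rw [hassoc, key]
    · rw [hanti, hinv]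

theorem stmt17 {S : Type*} (add : S → S → S) (neg : S → S)
    (m : S → S → S) (st : S → S)
    (hS : WeakStarBrace add neg m st) :
    {e : S | add e e = e ∧ neg e = e} = {f : S | m f f = f ∧ st f = f} ∧
    {e : S | add e e = e ∧ neg e = e} = {x : S | ∃ a : S, x = add a (neg a)} ∧
    {e : S | add e e = e ∧ neg e = e} = {x : S | ∃ a : S, x = m a (st a)} := by
  obtain ⟨haddR, hmR, _, hlink⟩ := hS
  have hma := regstar_proj m st hmR
  have hadd : {e : S | add e e = e ∧ neg e = e} = {x : S | ∃ a : S, x = add a (neg a)} := by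
    exact regstar_proj add neg haddR
  have hsets : {x : S | ∃ a : S, x = add a (neg a)} = {x : S | ∃ a : S, x = m a (st a)} := by
    ext x
    constructor
    · rintro ⟨a, rfl⟩
      refine ⟨neg a, ?_⟩
      rw [← hlink (neg a), haddR.2.2.1 a]
    · rintro ⟨a, rfl⟩
      refine ⟨neg a, ?_⟩
      rw [← hlink a, haddR.2.2.1 a]
  exact ⟨hadd.trans (hsets.trans hma.symm), hadd, hadd.trans hsets⟩
end
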